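/- Let k be a real number, R > 0, μ a finite (nonnegative) measure on ℝ³ whose support is contained in the closed ball of radius R centered at the origin, and f : ℝ³ → ℂ a function integrable with respect to μ. Define u(x) = ∫ exp(i k ‖x − y‖)/‖x − y‖ · f(y) dμ(y). Then u satisfies the Sommerfeld radiation condition: there exist constants C > 0 and R₀ > R such that for all x with ‖x‖ ≥ R₀, ‖ Du(x)(x/‖x‖) − i k u(x) ‖ ≤ C / ‖x‖², where Du(x)(x/‖x‖) denotes the directional (Fréchet) derivative of u at x in the radial direction x/‖x‖. -/

import Mathlib

/-!
Differentiating under the integral sign, `(∂_r - ik) u` is the integral against `f dμ` of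
`(∂_r - ik)` applied to the kernel `Φ(x - y)`. Writing `z = x - y`, `ẑ = z / ‖z‖` and
`x̂ = x / ‖x‖`, one has `∇Φ(z) = (ik - 1/‖z‖) Φ(z) ẑ`, so the integrand is
`Φ(z) (ik (⟪ẑ, x̂⟫ - 1) - ⟪ẑ, x̂⟫ / ‖z‖) f(y)`. Since `1 - ⟪ẑ, x̂⟫ = ‖ẑ - x̂‖² / 2` and
`‖ẑ - x̂‖ ≤ 2‖y‖ / ‖x‖`, both terms in the bracket are `O(1/‖x‖)` uniformly for `y` in the
support of `μ`, and `|Φ(z)| = 1/‖z‖` supplies the second factor `1/‖x‖`.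
-/

open MeasureTheory Complex

/-- The (topological) support of a measure: the set of points all of whose neighborhoods
have nonzero measure. -/
def measureSupport (μ : Measure (EuclideanSpace ℝ (Fin 3))) : Set (EuclideanSpace ℝ (Fin 3)) :=
  {x | ∀ U ∈ nhds x, μ U ≠ 0}

noncomputable section

theorem hasDerivAt_exp_I_mul_div (k : ℝ) {t : ℝ} (ht : t ≠ 0) :
    HasDerivAt (fun s : ℝ => exp (I * k * s) / s)
      ((I * k - (t⁻¹ : ℝ)) * (exp (I * k * t) / t)) t := by
  have hid : HasDerivAt (fun s : ℝ => (s : ℂ)) 1 t := (hasDerivAt_id t).ofReal_comp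
  have ht' : (t : ℂ) ≠ 0 := ofReal_ne_zero.mpr ht
  refine (((hid.const_mul (I * k)).cexp).div hid ht').congr_deriv ?_
  push_cast
  field_simp

section Normed

variable {E : Type*} [NormedAddCommGroup E]

theorem le_norm_sub_of_mem_ball {x x' y : E} {R : ℝ} (hy : ‖y‖ ≤ R)
    (hx' : x' ∈ Metric.ball x ((‖x‖ - R) / 2)) : (‖x‖ - R) / 2 ≤ ‖x' - y‖ := by
  rw [Metric.mem_ball, dist_eq_norm] at hx'
  linarith [norm_sub_norm_le x' y, norm_sub_norm_le x x', norm_sub_rev x x']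

theorem norm_inv_norm_smul [NormedSpace ℝ E] {z : E} (hz : z ≠ 0) : ‖‖z‖⁻¹ • z‖ = 1 := by
  simpa using norm_smul_inv_norm (𝕜 := ℝ) hz

theorem norm_inv_norm_smul_sub_le [NormedSpace ℝ E] {a b : E} (ha : a ≠ 0) (hb : b ≠ 0) :
    ‖‖a‖⁻¹ • a - ‖b‖⁻¹ • b‖ ≤ 2 * ‖a - b‖ / ‖a‖ := by
  have ha' : 0 < ‖a‖ := norm_pos_iff.mpr ha
  have hsplit : ‖a‖⁻¹ • a - ‖b‖⁻¹ • b = ‖a‖⁻¹ • (a - b) + (‖a‖⁻¹ - ‖b‖⁻¹) • b := by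
    rw [smul_sub, sub_smul]; abel
  have hdiff : ‖(‖a‖⁻¹ - ‖b‖⁻¹) • b‖ ≤ ‖a - b‖ / ‖a‖ :=
    calc ‖(‖a‖⁻¹ - ‖b‖⁻¹) • b‖ = |(‖b‖ - ‖a‖) / ‖a‖| := by
          rw [norm_smul, Real.norm_eq_abs, ← abs_norm b, ← abs_mul, abs_norm]
          congr 1
          field_simp
      _ ≤ ‖a - b‖ / ‖a‖ := by
          rw [abs_div, abs_norm]
          gcongr
          exact (abs_norm_sub_norm_le b a).trans_eq (norm_sub_rev b a)
  calc ‖‖a‖⁻¹ • a - ‖b‖⁻¹ • b‖ ≤ ‖‖a‖⁻¹ • (a - b)‖ + ‖(‖a‖⁻¹ - ‖b‖⁻¹) • b‖ :=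
        hsplit ▸ norm_add_le _ _
    _ ≤ ‖a - b‖ / ‖a‖ + ‖a - b‖ / ‖a‖ := by
        gcongr
        rw [norm_smul, norm_inv, norm_norm, inv_mul_eq_div]
    _ = 2 * ‖a - b‖ / ‖a‖ := by ring

def helmholtzKernel (k : ℝ) (z : E) : ℂ := exp (I * k * ‖z‖) / ‖z‖

theorem norm_helmholtzKernel (k : ℝ) (z : E) : ‖helmholtzKernel k z‖ = ‖z‖⁻¹ := by
  rw [helmholtzKernel, norm_div, mul_assoc, ← ofReal_mul, norm_exp_I_mul_ofReal, norm_real,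
    norm_norm, one_div]

theorem measurable_helmholtzKernel [MeasurableSpace E] [OpensMeasurableSpace E] (k : ℝ) :
    Measurable (helmholtzKernel (E := E) k) := by
  unfold helmholtzKernel
  fun_prop

def helmholtzPotential [MeasurableSpace E] (k : ℝ) (μ : Measure E) (f : E → ℂ) (x : E) : ℂ :=
  ∫ y, helmholtzKernel k (x - y) * f y ∂μ

theorem integrable_helmholtzKernel_mul [MeasurableSpace E] [BorelSpace E]
    [SecondCountableTopology E] {μ : Measure E} {f : E → ℂ} {R : ℝ} (k : ℝ)
    (hf : Integrable f μ) (hμ : ∀ᵐ y ∂μ, ‖y‖ ≤ R) {x : E} (hx : R < ‖x‖) :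
    Integrable (fun y => helmholtzKernel k (x - y) * f y) μ := by
  refine hf.bdd_mul (c := ((‖x‖ - R) / 2)⁻¹)
    ((measurable_helmholtzKernel k).comp (measurable_const.sub measurable_id)).aestronglyMeasurable
    (hμ.mono fun y hy => ?_)
  rw [norm_helmholtzKernel]
  exact inv_anti₀ (by linarith) (le_norm_sub_of_mem_ball hy (Metric.mem_ball_self (by linarith)))

end Normed

section InnerProduct

variable {E : Type*} [NormedAddCommGroup E] [InnerProductSpace ℝ E]

theorem hasFDerivAt_norm_of_ne_zero {x : E} (hx : x ≠ 0) :
    HasFDerivAt (‖·‖) (‖x‖⁻¹ • innerSL ℝ x) x := by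
  have hsqrt := (hasStrictFDerivAt_norm_sq x).hasFDerivAt.sqrt (by positivity)
  simp only [Real.sqrt_sq (norm_nonneg _)] at hsqrt
  refine hsqrt.congr_fderiv ?_
  ext v
  simp only [FunLike.coe_smul, Pi.smul_apply, innerSL_apply_apply, smul_eq_mul, nsmul_eq_mul]
  field_simp
  norm_num

/-- The scalar factor is kept apart from the continuous map `z ↦ ⟪z, ·⟫`, which makes the
derivative strongly measurable in `z` without finite-dimensionality. -/
def helmholtzKernelFDeriv (k : ℝ) (z : E) : E →L[ℝ] ℂ :=
  ((I * k - (‖z‖⁻¹ : ℝ)) * helmholtzKernel k z * (‖z‖⁻¹ : ℝ)) • (ofRealCLM ∘L innerSL ℝ z)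

theorem helmholtzKernelFDeriv_apply (k : ℝ) (z v : E) :
    helmholtzKernelFDeriv k z v =
      (I * k - (‖z‖⁻¹ : ℝ)) * helmholtzKernel k z * (inner ℝ (‖z‖⁻¹ • z) v : ℝ) := by
  simp only [helmholtzKernelFDeriv, FunLike.coe_smul, Pi.smul_apply,
    ContinuousLinearMap.coe_comp, Function.comp_apply, innerSL_apply_apply, ofRealCLM_apply,
    smul_eq_mul, real_inner_smul_left, ofReal_mul]
  ring

theorem hasFDerivAt_helmholtzKernel (k : ℝ) {z : E} (hz : z ≠ 0) :
    HasFDerivAt (helmholtzKernel k) (helmholtzKernelFDeriv k z) z := by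
  refine ((hasDerivAt_exp_I_mul_div k (norm_ne_zero_iff.mpr hz)).hasFDerivAt.comp z
    (hasFDerivAt_norm_of_ne_zero hz)).congr_fderiv ?_
  ext v
  simp [helmholtzKernelFDeriv_apply, helmholtzKernel, real_inner_smul_left]
  ring

theorem stronglyMeasurable_helmholtzKernelFDeriv [MeasurableSpace E] [OpensMeasurableSpace E]
    [SecondCountableTopology E] (k : ℝ) :
    StronglyMeasurable (helmholtzKernelFDeriv (E := E) k) := by
  have hscalar : Measurable fun z : E =>
      (I * k - (‖z‖⁻¹ : ℝ)) * helmholtzKernel k z * (‖z‖⁻¹ : ℝ) := by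
    have := measurable_helmholtzKernel (E := E) k
    fun_prop
  exact hscalar.stronglyMeasurable.smul
    (continuous_const.clm_comp (innerSL ℝ (E := E)).continuous).stronglyMeasurable

theorem norm_helmholtzKernelFDeriv_le (k : ℝ) (z : E) :
    ‖helmholtzKernelFDeriv k z‖ ≤ (|k| + ‖z‖⁻¹) * ‖z‖⁻¹ := by
  refine ContinuousLinearMap.opNorm_le_bound _ (by positivity) fun v => ?_
  rw [helmholtzKernelFDeriv_apply, norm_mul, norm_mul, norm_helmholtzKernel, norm_real]
  have hk : ‖I * k - (‖z‖⁻¹ : ℝ)‖ ≤ |k| + ‖z‖⁻¹ := by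
    refine (norm_sub_le _ _).trans_eq ?_
    simp
  have hv : ‖inner ℝ (‖z‖⁻¹ • z) v‖ ≤ ‖v‖ := by
    refine (norm_inner_le_norm _ _).trans (mul_le_of_le_one_left (norm_nonneg _) ?_)
    exact mem_closedBall_zero_iff.mp (inv_norm_smul_mem_unitClosedBall z)
  gcongr

theorem norm_helmholtzKernelFDeriv_sub_le (k : ℝ) (z : E) {e : E} (he : ‖e‖ ≤ 1) :
    ‖helmholtzKernelFDeriv k z e - I * k * helmholtzKernel k z‖ ≤
      ‖z‖⁻¹ * (|k| * (1 - inner ℝ (‖z‖⁻¹ • z) e) + ‖z‖⁻¹) := by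
  set c : ℝ := inner ℝ (‖z‖⁻¹ • z) e
  have hc : |c| ≤ 1 := (abs_real_inner_le_norm _ _).trans
    (mul_le_one₀ (mem_closedBall_zero_iff.mp (inv_norm_smul_mem_unitClosedBall z))
      (norm_nonneg _) he)
  have hfactor : helmholtzKernelFDeriv k z e - I * k * helmholtzKernel k z =
      helmholtzKernel k z * (I * k * (c - 1 : ℝ) - (‖z‖⁻¹ * c : ℝ)) := by
    rw [helmholtzKernelFDeriv_apply]; push_cast; ring
  have hfirst : ‖I * k * ((c - 1 : ℝ) : ℂ)‖ = |k| * (1 - c) := by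
    have hc1 : c - 1 ≤ 0 := by linarith [le_abs_self c]
    rw [norm_mul, norm_mul, norm_I, one_mul, norm_real, norm_real, Real.norm_eq_abs,
      Real.norm_eq_abs, abs_of_nonpos hc1, neg_sub]
  have hsecond : ‖((‖z‖⁻¹ * c : ℝ) : ℂ)‖ ≤ ‖z‖⁻¹ := by
    rw [norm_real, Real.norm_eq_abs, abs_mul, abs_of_nonneg (by positivity)]
    exact mul_le_of_le_one_right (by positivity) hc
  rw [hfactor, norm_mul, norm_helmholtzKernel]
  gcongr
  exact (norm_sub_le _ _).trans (hfirst ▸ add_le_add_right hsecond _)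

theorem one_sub_inner_inv_norm_smul_le {x y : E} (hx : x ≠ 0) (hxy : 2 * ‖y‖ ≤ ‖x‖) :
    0 ≤ 1 - inner ℝ (‖x - y‖⁻¹ • (x - y)) (‖x‖⁻¹ • x) ∧
      1 - inner ℝ (‖x - y‖⁻¹ • (x - y)) (‖x‖⁻¹ • x) ≤ ‖y‖ / ‖x‖ := by
  have hn : 0 < ‖x‖ := norm_pos_iff.mpr hx
  have hxy0 : x - y ≠ 0 := norm_pos_iff.mp (by linarith [norm_sub_norm_le x y])
  have hsq : 1 - inner ℝ (‖x - y‖⁻¹ • (x - y)) (‖x‖⁻¹ • x) =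
      ‖‖x‖⁻¹ • x - ‖x - y‖⁻¹ • (x - y)‖ ^ 2 / 2 := by
    rw [norm_sub_sq_real, norm_inv_norm_smul hx, norm_inv_norm_smul hxy0, real_inner_comm]
    ring
  have hdist : ‖‖x‖⁻¹ • x - ‖x - y‖⁻¹ • (x - y)‖ ≤ 2 * ‖y‖ / ‖x‖ := by
    simpa using norm_inv_norm_smul_sub_le hx hxy0
  rw [hsq]
  refine ⟨by positivity, ?_⟩
  calc ‖‖x‖⁻¹ • x - ‖x - y‖⁻¹ • (x - y)‖ ^ 2 / 2 ≤ (2 * ‖y‖ / ‖x‖) ^ 2 / 2 := by gcongr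
    _ = ‖y‖ / ‖x‖ * (2 * ‖y‖ / ‖x‖) := by ring
    _ ≤ ‖y‖ / ‖x‖ * 1 := by gcongr; rwa [div_le_one hn]
    _ = ‖y‖ / ‖x‖ := mul_one _

theorem norm_helmholtzKernelFDeriv_radial_sub_le (k : ℝ) {x y : E} (hx : x ≠ 0)
    (hxy : 2 * ‖y‖ ≤ ‖x‖) :
    ‖helmholtzKernelFDeriv k (x - y) (‖x‖⁻¹ • x) - I * k * helmholtzKernel k (x - y)‖ ≤
      (2 * |k| * ‖y‖ + 4) / ‖x‖ ^ 2 := by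
  have hn : 0 < ‖x‖ := norm_pos_iff.mpr hx
  have hr_inv : ‖x - y‖⁻¹ ≤ 2 / ‖x‖ := by
    rw [← one_div, div_le_div_iff₀ (by linarith [norm_sub_norm_le x y]) hn]
    linarith [norm_sub_norm_le x y]
  obtain ⟨hangle_nonneg, hangle⟩ := one_sub_inner_inv_norm_smul_le hx hxy
  calc _ ≤ ‖x - y‖⁻¹ * (|k| * (1 - inner ℝ (‖x - y‖⁻¹ • (x - y)) (‖x‖⁻¹ • x)) + ‖x - y‖⁻¹) :=
        norm_helmholtzKernelFDeriv_sub_le k _ (norm_inv_norm_smul hx).le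
    _ ≤ 2 / ‖x‖ * (|k| * (‖y‖ / ‖x‖) + 2 / ‖x‖) := by gcongr
    _ = (2 * |k| * ‖y‖ + 4) / ‖x‖ ^ 2 := by field_simp; ring

section Potential

variable [MeasurableSpace E] [BorelSpace E] [SecondCountableTopology E]
  {μ : Measure E} {f : E → ℂ} {R : ℝ}

theorem integrable_smul_helmholtzKernelFDeriv (k : ℝ) (hf : Integrable f μ)
    (hμ : ∀ᵐ y ∂μ, ‖y‖ ≤ R) {x : E} (hx : R < ‖x‖) :
    Integrable (fun y => f y • helmholtzKernelFDeriv k (x - y)) μ := by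
  set δ := (‖x‖ - R) / 2
  have hδ : 0 < δ := by simp only [δ]; linarith
  refine (hf.norm.const_mul ((|k| + δ⁻¹) * δ⁻¹)).mono'
    (hf.1.smul ((stronglyMeasurable_helmholtzKernelFDeriv k).comp_measurable
      (measurable_const.sub measurable_id)).aestronglyMeasurable)
    (hμ.mono fun y hy => ?_)
  have hsep : δ ≤ ‖x - y‖ := le_norm_sub_of_mem_ball hy (Metric.mem_ball_self hδ)
  rw [norm_smul, mul_comm]
  gcongr
  exact (norm_helmholtzKernelFDeriv_le k _).trans (by gcongr)

theorem hasFDerivAt_helmholtzPotential (k : ℝ) (hf : Integrable f μ)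
    (hμ : ∀ᵐ y ∂μ, ‖y‖ ≤ R) {x : E} (hx : R < ‖x‖) :
    HasFDerivAt (helmholtzPotential k μ f) (∫ y, f y • helmholtzKernelFDeriv k (x - y) ∂μ) x := by
  set δ := (‖x‖ - R) / 2
  have hδ : 0 < δ := by simp only [δ]; linarith
  have hsep : ∀ᵐ y ∂μ, ∀ x' ∈ Metric.ball x δ, δ ≤ ‖x' - y‖ :=
    hμ.mono fun y hy x' hx' => le_norm_sub_of_mem_ball hy hx'
  refine hasFDerivAt_integral_of_dominated_of_fderiv_le (Metric.ball_mem_nhds x hδ)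
    (F' := fun x' y => f y • helmholtzKernelFDeriv k (x' - y))
    (bound := fun y => (|k| + δ⁻¹) * δ⁻¹ * ‖f y‖)
    (.of_forall fun x' => ((measurable_helmholtzKernel k).comp
      (measurable_const.sub measurable_id)).aestronglyMeasurable.mul hf.1)
    (integrable_helmholtzKernel_mul k hf hμ hx)
    (integrable_smul_helmholtzKernelFDeriv k hf hμ hx).1
    (hsep.mono fun y hy x' hx' => ?_) (hf.norm.const_mul _)
    (hsep.mono fun y hy x' hx' => ?_)
  · rw [norm_smul, mul_comm]
    gcongr
    exact (norm_helmholtzKernelFDeriv_le k _).trans (by gcongr <;> exact hy x' hx')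
  · exact (hasFDerivAt_helmholtzKernel k (norm_pos_iff.mp (hδ.trans_le (hy x' hx')))).comp x'
      ((hasFDerivAt_id x').sub_const y) |>.mul_const (f y)

theorem norm_fderiv_helmholtzPotential_radial_sub_le (k : ℝ) (hf : Integrable f μ)
    (hμ : ∀ᵐ y ∂μ, ‖y‖ ≤ R) (hR : 0 < R) {x : E} (hx : 2 * R ≤ ‖x‖) :
    ‖fderiv ℝ (helmholtzPotential k μ f) x (‖x‖⁻¹ • x) - I * k * helmholtzPotential k μ f x‖ ≤
      (2 * |k| * R + 4) / ‖x‖ ^ 2 * ∫ y, ‖f y‖ ∂μ := by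
  have hxR : R < ‖x‖ := by linarith
  have hx0 : x ≠ 0 := norm_pos_iff.mp (hR.trans hxR)
  have hderiv_int := integrable_smul_helmholtzKernelFDeriv k hf hμ hxR
  have hintegrand :
      fderiv ℝ (helmholtzPotential k μ f) x (‖x‖⁻¹ • x) - I * k * helmholtzPotential k μ f x =
        ∫ y, f y * (helmholtzKernelFDeriv k (x - y) (‖x‖⁻¹ • x) -
          I * k * helmholtzKernel k (x - y)) ∂μ := by
    rw [(hasFDerivAt_helmholtzPotential k hf hμ hxR).fderiv,
      ContinuousLinearMap.integral_apply hderiv_int, helmholtzPotential, ← integral_const_mul,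
      ← integral_sub]
    · congr 1 with y
      simp only [smul_apply, smul_eq_mul]
      ring
    · exact (ContinuousLinearMap.apply ℝ ℂ (‖x‖⁻¹ • x)).integrable_comp hderiv_int
    · exact (integrable_helmholtzKernel_mul k hf hμ hxR).const_mul _
  rw [hintegrand, ← integral_const_mul]
  refine norm_integral_le_of_norm_le (hf.norm.const_mul _) (hμ.mono fun y hy => ?_)
  rw [norm_mul, mul_comm]
  gcongr
  exact (norm_helmholtzKernelFDeriv_radial_sub_le k hx0 (by linarith)).trans (by gcongr)

end Potential

end InnerProduct

theorem ae_norm_le_of_measureSupport_subset {μ : Measure (EuclideanSpace ℝ (Fin 3))} {R : ℝ}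
    (hμ : measureSupport μ ⊆ Metric.closedBall 0 R) : ∀ᵐ y ∂μ, ‖y‖ ≤ R := by
  have hsupp : measureSupport μ = μ.support := by
    ext x
    simp [measureSupport, Measure.mem_support_iff_forall, pos_iff_ne_zero]
  filter_upwards [Measure.support_mem_ae (μ := μ)] with y hy
  simpa using hμ (hsupp ▸ hy)

end

theorem potential_sommerfeld_radiation_general (k : ℝ) (R : ℝ) (hR : 0 < R)
    (μ : Measure (EuclideanSpace ℝ (Fin 3)))
    (hμ : measureSupport μ ⊆ Metric.closedBall 0 R)
    (f : EuclideanSpace ℝ (Fin 3) → ℂ) (hf : Integrable f μ)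
    (u : EuclideanSpace ℝ (Fin 3) → ℂ)
    (hu : ∀ x, u x = ∫ y, Complex.exp (Complex.I * k * ‖x - y‖) / (‖x - y‖ : ℂ) * f y ∂μ) :
    ∃ C > (0 : ℝ), ∃ R₀ > R, ∀ x : EuclideanSpace ℝ (Fin 3), R₀ ≤ ‖x‖ →
      ‖fderiv ℝ u x (‖x‖⁻¹ • x) - Complex.I * k * u x‖ ≤ C / ‖x‖ ^ 2 := by
  obtain rfl : u = helmholtzPotential k μ f := funext hu
  refine ⟨(2 * |k| * R + 4) * ((∫ y, ‖f y‖ ∂μ) + 1), by positivity, 2 * R, by linarith,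
    fun x hx => ?_⟩
  refine (norm_fderiv_helmholtzPotential_radial_sub_le k hf
    (ae_norm_le_of_measureSupport_subset hμ) hR hx).trans ?_
  rw [div_mul_eq_mul_div]
  gcongr
  linarith

/-- Sommerfeld radiation condition for single-layer-type potentials: if `μ` is
a finite measure supported in the closed ball of radius `R` and `f ∈ L¹(μ)`, then
`u(x) = ∫ exp(i k ‖x - y‖)/‖x - y‖ · f(y) dμ(y)` satisfies
`(∂_r - ik) u = O(‖x‖⁻²)` as `‖x‖ → ∞`, where `∂_r u (x) = Du(x)(x/‖x‖)`. -/
theorem potential_sommerfeld_radiation (k : ℝ) (R : ℝ) (hR : 0 < R)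
    (μ : Measure (EuclideanSpace ℝ (Fin 3))) [IsFiniteMeasure μ]
    (hμ : measureSupport μ ⊆ Metric.closedBall 0 R)
    (f : EuclideanSpace ℝ (Fin 3) → ℂ) (hf : Integrable f μ)
    (u : EuclideanSpace ℝ (Fin 3) → ℂ)
    (hu : ∀ x, u x = ∫ y, Complex.exp (Complex.I * k * ‖x - y‖) / (‖x - y‖ : ℂ) * f y ∂μ) :
    ∃ C > (0 : ℝ), ∃ R₀ > R, ∀ x : EuclideanSpace ℝ (Fin 3), R₀ ≤ ‖x‖ →
      ‖fderiv ℝ u x (‖x‖⁻¹ • x) - Complex.I * k * u x‖ ≤ C / ‖x‖ ^ 2 :=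
  potential_sommerfeld_radiation_general k R hR μ hμ f hf u hu
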